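/- arXiv:2403.18574 — 2 statements merged into one kernel-verified Lean document; each statement's English description precedes it below -/
import Mathlib

section
/- Uniqueness of the descent map: let P' ⊆ P be a nonempty ∂-invariant set of partitions and let Q : P' → P satisfy |Q(P)| = |P| and Q(∂P) = Q(P) − 1 for all P ∈ P'. Then Q(P) = Des(P) for all P ∈ P'. -/
/-
Write `|T|` for the size and `ℓ(T)` for the length of a partition. Subtracting 1 from every part
gives `|T| = |T - 1| + ℓ(T)`, and `∂` removes one cell for each element of `R(P)`, so
`|P| = |∂P| + μ₂(P)`. For `T = Q(P)`, where `T - 1 = Q(∂P)`, the size conditions therefore force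
`ℓ(Q(P)) = μ₂(P)`, and comparing the lengths of `Q(P)` and `Q(P) - 1` shows that the number of
parts `1` of `Q(P)` is `μ₂(P) - μ₂(∂P)`. This difference is the indicator of
`1 ∈ R(P) \ R(∂P)`, that is of `1 ∈ Des(P)`: moving `q` to `q + 1` when `q + 1 ∈ R(P)` is a
bijection from `R(∂P)` onto `R(P)` with that one possible exception removed. Finally the number of
parts `n + 1` of `Q(P)` is the number of parts `1` of `Q(∂ⁿP)`, and `Des` obeys the same recursion
`Des(∂P) = Des(P) - 1`.
-/

open scoped Classical

noncomputable section

/-- `f` is a frequency sequence: `f 0 = 0` and finite support. -/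
def IsFreq (f : ℕ → ℕ) : Prop := f 0 = 0 ∧ (Function.support f).Finite

/-- size `|f| = ∑ i·f i`. -/
def fsize (f : ℕ → ℕ) : ℕ := ∑ᶠ n, n * f n

/-- length `ℓ(f) = ∑ f i`. -/
def flen (f : ℕ → ℕ) : ℕ := ∑ᶠ n, f n

/-- the support `S(f)`. -/
def suppF (f : ℕ → ℕ) : Set ℕ := {i | 1 ≤ i ∧ f i ≠ 0}

/-- `[i,j]` is a spread of `f`: a maximal interval contained in the support. -/
def IsSpread (f : ℕ → ℕ) (i j : ℕ) : Prop :=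
  1 ≤ i ∧ i ≤ j ∧ (∀ k, i ≤ k → k ≤ j → f k ≠ 0) ∧ (i = 1 ∨ f (i - 1) = 0) ∧ f (j + 1) = 0

/-- `L(f)`: every other element of each spread, starting from the left end. -/
def Lset (f : ℕ → ℕ) : Set ℕ :=
  {q | ∃ i j, IsSpread f i j ∧ i ≤ q ∧ q ≤ j ∧ (q - i) % 2 = 0}

/-- `R(f)`: every other element of each spread, starting from the right end. -/
def Rset (f : ℕ → ℕ) : Set ℕ :=
  {q | ∃ i j, IsSpread f i j ∧ i ≤ q ∧ q ≤ j ∧ (j - q) % 2 = 0}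

/-- the 2-measure, as the cardinality of `R(f)`. -/
def mu2 (f : ℕ → ℕ) : ℕ := (Rset f).ncard

/-- The Burge demotion operator `∂`. -/
def dB (f : ℕ → ℕ) : ℕ → ℕ := fun n =>
  if n = 0 then 0
  else f n - (if n ∈ Rset f then 1 else 0) + (if n + 1 ∈ Rset f then 1 else 0)

/-- The promotion operator `α`. -/
def aB (f : ℕ → ℕ) : ℕ → ℕ := fun n =>
  if n = 0 then 0
  else f n - (if n ∈ Lset f then 1 else 0) + (if n - 1 ∈ Lset f then 1 else 0)

/-- the shift `(f₂, f₃, …)`; on partitions this is `P ↦ P - 1`. -/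
def tailF (f : ℕ → ℕ) : ℕ → ℕ := fun n => if n = 0 then 0 else f (n + 1)

/-- The operator `β`: `β(f) = (f₁ + 1, α(f₂, f₃, …))`. -/
def bB (f : ℕ → ℕ) : ℕ → ℕ := fun n =>
  if n = 0 then 0 else if n = 1 then f 1 + 1 else aB (tailF f) (n - 1)

/-- the zero sequence (empty partition). -/
def zeroF : ℕ → ℕ := fun _ => 0

/-- `k` minimal with `∂^[k] f = 0`. -/
def chainK (f : ℕ → ℕ) : ℕ :=
  if h : ∃ m, dB^[m] f = zeroF then Nat.find h else 0

/-- The Burge code of `f`, as a list of letters; `false` = `a`, `true` = `b`.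
The `i`-th letter (0-indexed `i`) records whether `∂^[i] f ∈ B`, i.e. `1 ∈ R(∂^[i] f)`. -/
def burgeCode (f : ℕ → ℕ) : List Bool :=
  (List.range (chainK f + 1)).map fun i => if 1 ∈ Rset (dB^[i] f) then true else false

/-- descent set of a word: 1-indexed positions `i` with `ωᵢ = b`, `ω_{i+1} = a`. -/
def descSet (w : List Bool) : Set ℕ :=
  {i | 1 ≤ i ∧ w[i - 1]? = some true ∧ w[i]? = some false}

/-- the descent set of (the Burge code of) a partition. -/
def DesSet (f : ℕ → ℕ) : Set ℕ := descSet (burgeCode f)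

/-- `Des(P)` regarded as a partition, via its frequency sequence. -/
def desFreq (f : ℕ → ℕ) : ℕ → ℕ := fun i => if i ∈ DesSet f then 1 else 0

/-- the 2-measure as the maximal size of a subset of the support without
consecutive pairs. -/
def twoMeasure (f : ℕ → ℕ) : ℕ :=
  sSup {n | ∃ T : Finset ℕ, (↑T : Set ℕ) ⊆ suppF f ∧ (∀ x ∈ T, x + 1 ∉ T) ∧ T.card = n}

/-- evaluation at `i`: `ν_i(f) = i f_i + (i+1) f_{i+1} + 2 ∑_{j>i+1} f_j`, with `ν₀ = ν₁`. -/
def nuI (f : ℕ → ℕ) (i : ℕ) : ℕ :=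
  (max i 1) * f (max i 1) + (max i 1 + 1) * f (max i 1 + 1)
    + 2 * ∑ᶠ j ∈ {j : ℕ | max i 1 + 1 < j}, f j

/-- annihilation at `i`: `ρ_i(f) = (f₁, …, f_{i-1}, f_{i+2}, f_{i+3}, …)`, with `ρ₀ = ρ₁`. -/
def rhoI (f : ℕ → ℕ) (i : ℕ) : ℕ → ℕ := fun n =>
  if n = 0 then 0 else if n < max i 1 then f n else f (n + 2)

/-- `i ≥ 1` is right admissible in `f`. -/
def RightAdm (f : ℕ → ℕ) (i : ℕ) : Prop :=
  1 ≤ i ∧ 0 < f i ∧ (0 < f (i + 1) ∨ (f (i - 1) = 0 ∧ f (i + 1) = 0))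

/-- `i ≥ 0` is left admissible in `f`. -/
def LeftAdm (f : ℕ → ℕ) (i : ℕ) : Prop :=
  0 < f (i + 1) ∧ (0 < f i ∨ (f i = 0 ∧ f (i + 2) = 0))

/-- `i` is a maximal index for `f`: `ν_i(f)` is nonzero and maximal. -/
def MaxIdx (f : ℕ → ℕ) (i : ℕ) : Prop :=
  nuI f i ≠ 0 ∧ ∀ j, nuI f j ≤ nuI f i

end

open Function

lemma finsum_nat_eq_add_finsum_succ {M : Type*} [AddCommMonoid M] {g : ℕ → M}
    (hg : (support g).Finite) : ∑ᶠ n, g n = g 0 + ∑ᶠ n, g (n + 1) := by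
  have huniv : insert 0 (Set.range Nat.succ) = Set.univ := by
    ext n; cases n <;> simp
  rw [← finsum_mem_univ, ← huniv,
    finsum_mem_insert' _ (by simp) (hg.subset Set.inter_subset_right),
    finsum_mem_range Nat.succ_injective]

theorem Nat.decreasing_induction_by_two {P : ℕ → Prop} {N : ℕ} (hN : ∀ q, N ≤ q → P q)
    (h : ∀ q, P (q + 2) → P q) (q : ℕ) : P q := by
  induction hk : N - q using Nat.strong_induction_on generalizing q with
  | _ k ih =>
    by_cases hq : N ≤ q
    · exact hN q hq
    · exact h q (ih (N - (q + 2)) (by omega) (q + 2) rfl)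

variable {f g : ℕ → ℕ}

lemma IsFreq.exists_forall_ge_eq_zero (hf : IsFreq f) : ∃ N, ∀ m, N ≤ m → f m = 0 := by
  obtain ⟨N, hN⟩ := hf.2.bddAbove
  exact ⟨N + 1, fun m hm => by_contra fun h => by have := hN h; omega⟩

lemma IsFreq.support_succ_finite (hf : IsFreq f) : (support fun n => f (n + 1)).Finite :=
  hf.2.preimage Nat.succ_injective.injOn

lemma IsFreq.tailF (hf : IsFreq f) : IsFreq (tailF f) :=
  ⟨rfl, hf.support_succ_finite.subset fun n hn => by
    simp only [_root_.tailF, mem_support] at hn ⊢; split_ifs at hn <;> simp_all⟩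

lemma flen_tailF (hf : IsFreq f) : flen (tailF f) + f 1 = flen f := by
  rw [flen, flen, finsum_nat_eq_add_finsum_succ hf.tailF.2, finsum_nat_eq_add_finsum_succ hf.2,
    finsum_nat_eq_add_finsum_succ hf.support_succ_finite, hf.1]
  simp [tailF, add_comm]

lemma fsize_tailF (hf : IsFreq f) : fsize (tailF f) + flen f = fsize f := by
  have hs := hf.support_succ_finite
  have htail : fsize (tailF f) = ∑ᶠ n, n * f (n + 1) := by
    refine finsum_congr fun n => ?_
    rcases n with _ | n <;> simp [tailF]
  calc fsize (tailF f) + flen f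
      = ∑ᶠ n, n * f (n + 1) + ∑ᶠ n, f (n + 1) := by
        rw [htail, flen, finsum_nat_eq_add_finsum_succ hf.2, hf.1, zero_add]
    _ = ∑ᶠ n, (n + 1) * f (n + 1) := by
        rw [← finsum_add_distrib (hs.subset (support_mul_subset_right _ _)) hs]
        simp only [add_mul, one_mul]
    _ = fsize f := by
        rw [fsize, finsum_nat_eq_add_finsum_succ
          (hf.2.subset (support_mul_subset_right (fun n : ℕ => n) f))]
        simp

lemma fsize_add (hf : (support f).Finite) (hg : (support g).Finite) :
    fsize (f + g) = fsize f + fsize g := by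
  simp only [fsize, Pi.add_apply, mul_add]
  exact finsum_add_distrib (hf.subset (support_mul_subset_right _ _))
    (hg.subset (support_mul_subset_right _ _))

lemma flen_indicator_one (s : Set ℕ) : flen (s.indicator 1) = s.ncard := by
  rw [flen, ← finsum_one, finsum_mem_def]
  rfl

lemma one_le_of_mem_Rset {q : ℕ} (h : q ∈ Rset f) : 1 ≤ q := by
  obtain ⟨i, j, hs, hiq, -⟩ := h
  exact hs.1.trans hiq

lemma ne_zero_of_mem_Rset {q : ℕ} (h : q ∈ Rset f) : f q ≠ 0 := by
  obtain ⟨i, j, hs, hiq, hqj, -⟩ := h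
  exact hs.2.2.1 q hiq hqj

lemma IsFreq.Rset_finite (hf : IsFreq f) : (Rset f).Finite :=
  hf.2.subset fun _ hq => ne_zero_of_mem_Rset hq

lemma IsFreq.exists_forall_ge_notMem_Rset (hf : IsFreq f) :
    ∃ N, ∀ q, N ≤ q → q ∉ Rset f :=
  hf.exists_forall_ge_eq_zero.imp fun _ hN q hq h => ne_zero_of_mem_Rset h (hN q hq)

lemma IsFreq.exists_isSpread (hf : IsFreq f) {q : ℕ} (hq1 : 1 ≤ q) (hq : f q ≠ 0) :
    ∃ i j, IsSpread f i j ∧ i ≤ q ∧ q ≤ j := by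
  obtain ⟨N, hN⟩ := hf.exists_forall_ge_eq_zero
  have hright : ∃ m, q < m ∧ f m = 0 := ⟨max N (q + 1), by omega, hN _ (le_max_left _ _)⟩
  set k := Nat.findGreatest (fun m => f m = 0) q
  set l := Nat.find hright
  have hk : f k = 0 := Nat.findGreatest_spec (P := fun m => f m = 0) (Nat.zero_le q) hf.1
  have hkq : k < q := (Nat.findGreatest_le q).lt_of_ne fun h => hq (h ▸ hk)
  obtain ⟨hql, hl⟩ := Nat.find_spec hright
  have hkl : ∀ m, k < m → m < l → f m ≠ 0 := by
    intro m hkm hml h0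
    rcases le_or_gt m q with hmq | hqm
    · exact Nat.findGreatest_is_greatest hkm hmq h0
    · exact Nat.find_min hright hml ⟨hqm, h0⟩
  refine ⟨k + 1, l - 1, ⟨by omega, by omega, fun m h1 h2 => hkl m (by omega) (by omega),
    Or.inr (by simpa using hk), by rwa [Nat.sub_add_cancel (by omega)]⟩, by omega, by omega⟩

lemma mem_Rset_iff (hf : IsFreq f) {q : ℕ} :
    q ∈ Rset f ↔ 1 ≤ q ∧ f q ≠ 0 ∧ (f (q + 1) = 0 ∨ q + 2 ∈ Rset f) := by
  constructor
  · rintro ⟨i, j, hs, hiq, hqj, hpar⟩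
    refine ⟨hs.1.trans hiq, hs.2.2.1 q hiq hqj, ?_⟩
    rcases hqj.eq_or_lt with rfl | hlt
    · exact Or.inl hs.2.2.2.2
    · exact Or.inr ⟨i, j, hs, by omega, by omega, by omega⟩
  · rintro ⟨hq1, hq, hnext⟩
    by_cases hq2 : f (q + 1) = 0
    · obtain ⟨i, j, hs, hiq, hqj⟩ := hf.exists_isSpread hq1 hq
      have hjq : j = q := by
        by_contra hne
        exact hs.2.2.1 (q + 1) (by omega) (by omega) hq2
      exact ⟨i, j, hs, hiq, hqj, by omega⟩
    · obtain ⟨i, j, hs, hiq, hqj, hpar⟩ := hnext.resolve_left hq2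
      have hiq' : i ≤ q := by
        by_contra hlt
        rcases hs.2.2.2.1 with hi | hi
        · omega
        · obtain rfl | rfl : i = q + 1 ∨ i = q + 2 := by omega
          · exact hq (by simpa using hi)
          · exact hq2 (by simpa using hi)
      exact ⟨i, j, hs, hiq', by omega, by omega⟩

lemma succ_notMem_Rset (hf : IsFreq f) {q : ℕ} (hq : q ∈ Rset f) : q + 1 ∉ Rset f := by
  obtain ⟨N, hN⟩ := hf.exists_forall_ge_notMem_Rset
  refine Nat.decreasing_induction_by_two (N := N) (P := fun q => q ∈ Rset f → q + 1 ∉ Rset f)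
    (fun q hq h => absurd h (hN q hq)) (fun q ih h0 h1 => ?_) q hq
  have h2 := ((mem_Rset_iff hf).1 h0).2.2.resolve_left ((mem_Rset_iff hf).1 h1).2.1
  exact ih h2 (((mem_Rset_iff hf).1 h1).2.2.resolve_left ((mem_Rset_iff hf).1 h2).2.1)

lemma dB_apply {n : ℕ} (hn : n ≠ 0) :
    dB f n = f n - (if n ∈ Rset f then 1 else 0) + (if n + 1 ∈ Rset f then 1 else 0) := by
  simp [dB, hn]

lemma IsFreq.dB (hf : IsFreq f) : IsFreq (dB f) := by
  refine ⟨by simp [_root_.dB], ?_⟩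
  obtain ⟨N, hN⟩ := hf.exists_forall_ge_notMem_Rset
  obtain ⟨M, hM⟩ := hf.exists_forall_ge_eq_zero
  refine (Set.finite_Iio (max N M + 1)).subset fun m hm => ?_
  by_contra hge
  simp only [Set.mem_Iio, not_lt] at hge
  rw [mem_support, dB_apply (by omega), hM m (by omega), if_neg (hN m (by omega)),
    if_neg (hN (m + 1) (by omega))] at hm
  exact hm rfl

lemma mem_Rset_of_mem_Rset_dB (hf : IsFreq f) {q : ℕ} (h : q ∈ Rset (dB f))
    (hsucc : q + 1 ∉ Rset f) : q ∈ Rset f := by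
  obtain ⟨N, hN⟩ := hf.dB.exists_forall_ge_notMem_Rset
  refine Nat.decreasing_induction_by_two (N := N)
    (P := fun q => q ∈ Rset (dB f) → q + 1 ∉ Rset f → q ∈ Rset f)
    (fun q hq h => absurd h (hN q hq)) (fun q ih h hsucc => ?_) q h hsucc
  by_contra hq
  obtain ⟨hq1, hdq, hnext⟩ := (mem_Rset_iff hf.dB).1 h
  rw [dB_apply (by omega), if_neg hq, if_neg hsucc] at hdq
  refine hq ((mem_Rset_iff hf).2 ⟨hq1, by simpa using hdq, ?_⟩)
  rcases hnext with hnext | hnext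
  · rw [dB_apply (by omega), if_neg hsucc] at hnext
    exact Or.inl (by omega)
  · by_cases hq3 : q + 3 ∈ Rset f
    · -- otherwise `q + 1` would lie in `Rset f`
      exact Or.inl (by_contra fun h1 => hsucc ((mem_Rset_iff hf).2 ⟨by omega, h1, Or.inr hq3⟩))
    · exact Or.inr (ih hnext hq3)

lemma mem_Rset_dB_of_succ_mem_Rset (hf : IsFreq f) {q : ℕ} (hq1 : 1 ≤ q)
    (h : q + 1 ∈ Rset f) (hd : q + 1 ∉ Rset (dB f)) : q ∈ Rset (dB f) := by
  obtain ⟨N, hN⟩ := hf.exists_forall_ge_notMem_Rset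
  refine Nat.decreasing_induction_by_two (N := N)
    (P := fun q => 1 ≤ q → q + 1 ∈ Rset f → q + 1 ∉ Rset (dB f) → q ∈ Rset (dB f))
    (fun q hq _ h => absurd h (hN (q + 1) (by omega))) (fun q ih hq1 h hd => ?_) q hq1 h hd
  have hq : q ∉ Rset f := fun h' => succ_notMem_Rset hf h' h
  have hq2 : q + 2 ∉ Rset f := succ_notMem_Rset hf h
  have hdq : dB f q = f q + 1 := by
    rw [dB_apply (by omega), if_neg hq, if_pos h]; omega
  have hdq1 : dB f (q + 1) = f (q + 1) - 1 := by
    rw [dB_apply (by omega), if_pos h, if_neg hq2]; omega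
  refine (mem_Rset_iff hf.dB).2 ⟨hq1, by omega, ?_⟩
  by_cases hf1 : f (q + 1) = 1
  · exact Or.inl (by omega)
  have hd' : ¬(dB f (q + 2) = 0 ∨ q + 3 ∈ Rset (dB f)) := fun h' =>
    hd ((mem_Rset_iff hf.dB).2 ⟨by omega, by have := ne_zero_of_mem_Rset h; omega, h'⟩)
  rw [not_or] at hd'
  by_cases hq3 : q + 3 ∈ Rset f
  · exact Or.inr (ih (by omega) hq3 hd'.2)
  · have hf2 : f (q + 2) = 0 := ((mem_Rset_iff hf).1 h).2.2.resolve_right hq3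
    exfalso
    exact hd'.1 (by rw [dB_apply (by omega), hf2, if_neg hq2, if_neg hq3])

lemma fsize_dB (hf : IsFreq f) : fsize (dB f) + mu2 f = fsize f := by
  set r := (Rset f).indicator (1 : ℕ → ℕ)
  have hr : ∀ n, r n = if n ∈ Rset f then 1 else 0 := fun n => by
    simp [r, Set.indicator_apply]
  have hrfreq : IsFreq r :=
    ⟨by rw [hr, if_neg fun h => by have := one_le_of_mem_Rset h; omega],
      hf.Rset_finite.subset Set.support_indicator_subset⟩
  -- `∂` moves one unit from each `q ∈ R(f)` down to `q - 1`
  have hshift : dB f + r = f + tailF r := by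
    funext n
    rcases n with _ | n
    · simp [dB, hf.1, tailF, hrfreq.1]
    · simp only [Pi.add_apply, dB_apply n.add_one_ne_zero, tailF, n.add_one_ne_zero, if_false, hr]
      by_cases h : n + 1 ∈ Rset f
      · have := ne_zero_of_mem_Rset h
        split_ifs <;> omega
      · split_ifs <;> omega
  have hsize := congrArg fsize hshift
  rw [fsize_add hf.dB.2 hrfreq.2, fsize_add hf.2 hrfreq.tailF.2] at hsize
  have htail := fsize_tailF hrfreq
  rw [flen_indicator_one] at htail
  rw [mu2]
  omega

lemma dB_zeroF : dB zeroF = zeroF := by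
  have h : ∀ q, q ∉ Rset zeroF := fun q h => ne_zero_of_mem_Rset h rfl
  funext n
  simp [dB, zeroF, h]

lemma IsFreq.Rset_nonempty (hf : IsFreq f) (h0 : f ≠ zeroF) : (Rset f).Nonempty := by
  obtain ⟨q, hq⟩ : ∃ q, f q ≠ 0 := by
    by_contra! h
    exact h0 (funext h)
  have hq1 : 1 ≤ q := Nat.one_le_iff_ne_zero.2 fun h => hq (h ▸ hf.1)
  obtain ⟨i, j, hs, -⟩ := hf.exists_isSpread hq1 hq
  exact ⟨j, i, j, hs, hs.2.1, le_rfl, by simp⟩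

lemma exists_iterate_dB_eq_zeroF (hf : IsFreq f) : ∃ m, dB^[m] f = zeroF := by
  induction hs : fsize f using Nat.strong_induction_on generalizing f with
  | _ s ih =>
    by_cases h0 : f = zeroF
    · exact ⟨0, h0⟩
    have hpos : 0 < mu2 f := (Set.ncard_pos hf.Rset_finite).2 (hf.Rset_nonempty h0)
    have := fsize_dB hf
    obtain ⟨m, hm⟩ := ih (fsize (dB f)) (by omega) hf.dB rfl
    exact ⟨m + 1, hm⟩

lemma iterate_dB_eq_zeroF_of_chainK_le (hf : IsFreq f) {m : ℕ} (hm : chainK f ≤ m) :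
    dB^[m] f = zeroF := by
  have hK : dB^[chainK f] f = zeroF := by
    rw [chainK, dif_pos (exists_iterate_dB_eq_zeroF hf)]
    exact Nat.find_spec (exists_iterate_dB_eq_zeroF hf)
  rw [← Nat.sub_add_cancel hm, iterate_add_apply, hK, iterate_fixed dB_zeroF]

lemma lt_chainK_of_one_mem_Rset (hf : IsFreq f) {m : ℕ} (h : 1 ∈ Rset (dB^[m] f)) :
    m < chainK f := by
  by_contra hm
  rw [iterate_dB_eq_zeroF_of_chainK_le hf (not_lt.1 hm)] at h
  exact ne_zero_of_mem_Rset h rfl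

lemma burgeCode_getElem?_eq_some_iff {m : ℕ} {b : Bool} :
    (burgeCode f)[m]? = some b ↔ m ≤ chainK f ∧ decide (1 ∈ Rset (dB^[m] f)) = b := by
  simp [burgeCode, List.getElem?_eq_some_iff]

lemma succ_mem_DesSet_iff (hf : IsFreq f) (i : ℕ) :
    i + 1 ∈ DesSet f ↔ 1 ∈ Rset (dB^[i] f) ∧ 1 ∉ Rset (dB^[i + 1] f) := by
  have hlt : 1 ∈ Rset (dB^[i] f) → i < chainK f := lt_chainK_of_one_mem_Rset hf
  simp only [DesSet, descSet, Set.mem_ofPred_eq, burgeCode_getElem?_eq_some_iff,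
    add_tsub_cancel_right, decide_eq_true_iff, decide_eq_false_iff_not]
  exact ⟨fun h => ⟨h.2.1.2, h.2.2.2⟩, fun h => ⟨by omega, ⟨(hlt h.1).le, h.1⟩, hlt h.1, h.2⟩⟩

lemma mu2_dB_add_ncard (hf : IsFreq f) :
    mu2 (dB f) + (Rset f ∩ ({1} \ Rset (dB f))).ncard = mu2 f := by
  set D := {1} \ Rset (dB f)
  let ψ : ℕ → ℕ := fun q => if q + 1 ∈ Rset f then q + 1 else q
  have hinj : Set.InjOn ψ (Rset (dB f)) := by
    intro a ha b hb hab
    simp only [ψ] at hab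
    split_ifs at hab
    · omega
    · exact absurd (hab ▸ hb) (succ_notMem_Rset hf.dB ha)
    · exact absurd (hab ▸ ha) (succ_notMem_Rset hf.dB hb)
    · exact hab
  have himage : ψ '' Rset (dB f) = Rset f \ D := by
    ext p
    constructor
    · rintro ⟨q, hq, rfl⟩
      simp only [ψ]
      split_ifs with h
      · exact ⟨h, fun hD => by have := one_le_of_mem_Rset hq; simp [D] at hD; omega⟩
      · exact ⟨mem_Rset_of_mem_Rset_dB hf hq h, fun hD => hD.2 hq⟩
    · rintro ⟨hp, hpD⟩
      by_cases hpd : p ∈ Rset (dB f)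
      · exact ⟨p, hpd, if_neg (succ_notMem_Rset hf hp)⟩
      · obtain ⟨q, rfl⟩ : ∃ q, p = q + 1 := ⟨p - 1, by have := one_le_of_mem_Rset hp; omega⟩
        have hq1 : 1 ≤ q := by
          by_contra h0
          exact hpD ⟨by simp; omega, hpd⟩
        exact ⟨q, mem_Rset_dB_of_succ_mem_Rset hf hq1 hp hpd, if_pos hp⟩
  rw [mu2, mu2, ← hinj.ncard_image, himage, add_comm]
  exact Set.ncard_inter_add_ncard_sdiff_eq_ncard _ _ hf.Rset_finite

lemma desFreq_zero : desFreq f 0 = 0 :=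
  if_neg fun h => absurd h.1 (by omega)

lemma desFreq_dB (hf : IsFreq f) : desFreq (dB f) = tailF (desFreq f) := by
  funext n
  rcases n with _ | n
  · simp [desFreq_zero, tailF]
  · simp only [desFreq, tailF, n.add_one_ne_zero, if_false, succ_mem_DesSet_iff hf,
      succ_mem_DesSet_iff hf.dB, ← iterate_succ_apply]

lemma desFreq_one_eq_ncard (hf : IsFreq f) :
    desFreq f 1 = (Rset f ∩ ({1} \ Rset (dB f))).ncard := by
  have h1 := succ_mem_DesSet_iff hf 0
  rw [iterate_zero_apply, zero_add, iterate_one] at h1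
  rw [desFreq, h1]
  split_ifs with h
  · have hD : Rset f ∩ ({1} \ Rset (dB f)) = {1} := by
      ext q
      simp only [Set.mem_inter_iff, Set.mem_sdiff, Set.mem_singleton_iff]
      exact ⟨fun hq => hq.2.1, by rintro rfl; exact ⟨h.1, rfl, h.2⟩⟩
    rw [hD, Set.ncard_singleton]
  · have hD : Rset f ∩ ({1} \ Rset (dB f)) = ∅ := by
      ext q
      simp only [Set.mem_inter_iff, Set.mem_sdiff, Set.mem_singleton_iff,
        Set.mem_empty_iff_false, iff_false]
      rintro ⟨hq, rfl, hqd⟩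
      exact h ⟨hq, hqd⟩
    rw [hD, Set.ncard_empty]

lemma mu2_dB_add_desFreq_one (hf : IsFreq f) : mu2 (dB f) + desFreq f 1 = mu2 f := by
  rw [desFreq_one_eq_ncard hf, mu2_dB_add_ncard hf]

lemma apply_succ_eq_apply_one_iterate {α : Type*} {S : Set α} {d : α → α} {Q : α → ℕ → ℕ}
    (hd : Set.MapsTo d S S) (hQ : ∀ g ∈ S, Q (d g) = tailF (Q g)) (n : ℕ) :
    ∀ g ∈ S, Q g (n + 1) = Q (d^[n] g) 1 := by
  induction n with
  | zero => exact fun _ _ => rfl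
  | succ n ih =>
    intro g hg
    rw [iterate_succ_apply, ← ih (d g) (hd hg), hQ g hg]
    rfl

lemma flen_eq_mu2_of_fsize_eq {h : ℕ → ℕ} (hg : IsFreq g) (hh : IsFreq h)
    (hsize : fsize h = fsize g) (htail : fsize (tailF h) = fsize (dB g)) : flen h = mu2 g := by
  have := fsize_tailF hh
  have := fsize_dB hg
  omega

lemma apply_one_eq_desFreq_one {h : ℕ → ℕ} (hg : IsFreq g) (hh : IsFreq h)
    (hlen : flen h = mu2 g) (htail : flen (tailF h) = mu2 (dB g)) : h 1 = desFreq g 1 := by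
  have := flen_tailF hh
  have := mu2_dB_add_desFreq_one hg
  omega

theorem stmt13_general (P' : Set (ℕ → ℕ)) (hsub : ∀ f ∈ P', IsFreq f)
    (hinv : ∀ f ∈ P', dB f ∈ P')
    (Q : (ℕ → ℕ) → (ℕ → ℕ)) (hQfreq : ∀ f ∈ P', IsFreq (Q f))
    (hsize : ∀ f ∈ P', fsize (Q f) = fsize f)
    (hstep : ∀ f ∈ P', Q (dB f) = tailF (Q f)) :
    ∀ f ∈ P', Q f = desFreq f := by
  have hlen : ∀ g ∈ P', flen (Q g) = mu2 g := fun g hg =>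
    flen_eq_mu2_of_fsize_eq (hsub g hg) (hQfreq g hg) (hsize g hg)
      (by rw [← hstep g hg, hsize _ (hinv g hg)])
  have hone : ∀ g ∈ P', Q g 1 = desFreq g 1 := fun g hg =>
    apply_one_eq_desFreq_one (hsub g hg) (hQfreq g hg) (hlen g hg)
      (by rw [← hstep g hg, hlen _ (hinv g hg)])
  intro f hf
  funext n
  rcases n with _ | n
  · rw [(hQfreq f hf).1, desFreq_zero]
  · rw [apply_succ_eq_apply_one_iterate hinv hstep n f hf,
      apply_succ_eq_apply_one_iterate (S := {g | IsFreq g}) (fun _ hg => IsFreq.dB hg)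
        (fun _ hg => desFreq_dB hg) n f (hsub f hf),
      hone _ (Set.MapsTo.iterate hinv n hf)]

/-- uniqueness of the descent map: if `P'` is a nonempty
`∂`-invariant set of partitions and `Q : P' → P` satisfies `|Q(P)| = |P|` and
`Q(∂P) = Q(P) - 1`, then `Q = Des` on `P'`.  (Partitions are represented by
their frequency sequences; `T - 1` corresponds to `tailF`.) -/
theorem stmt13 (P' : Set (ℕ → ℕ)) (hne : P'.Nonempty) (hsub : ∀ f ∈ P', IsFreq f)
    (hinv : ∀ f ∈ P', dB f ∈ P')
    (Q : (ℕ → ℕ) → (ℕ → ℕ)) (hQfreq : ∀ f ∈ P', IsFreq (Q f))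
    (hsize : ∀ f ∈ P', fsize (Q f) = fsize f)
    (hstep : ∀ f ∈ P', Q (dB f) = tailF (Q f)) :
    ∀ f ∈ P', Q f = desFreq f :=
  stmt13_general P' hsub hinv Q hQfreq hsize hstep
end

section
/- If f ∈ F is nonzero and i is a maximal index for f (i.e., ν_i(f) is nonzero and maximal among all ν_j(f)), then i is equivalent to a right admissible index and also equivalent to a left admissible index, where indices i, j are equivalent if ρ_i(f) = ρ_j(f). -/
open scoped Classical

/-!
Write `I = max i 1`. Comparing `ν` at neighbouring indices gives
`ν_{I+1} + I f_I = ν_I + I f_{I+2}`, so maximality of `ν_I` forces `f_{I+2} ≤ f_I` and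
`f_{I-1} ≤ f_{I+1}`; it also forces `f_{I+1} > 0` when `f_I = 0`, since otherwise `ν` stays
maximal and `f` stays zero all the way to the right, making `ν_I = 0`. Now `I` itself is right
and left admissible when `f_I, f_{I+1} > 0`; if `f_I = 0` then `f_I = f_{I+2} = 0` and `I + 1`
is right admissible with `ρ_{I+1} = ρ_I`; if `f_{I+1} = 0` then `f_{I-1} = f_{I+1} = 0` and `I - 1`
is left admissible with `ρ_{I-1} = ρ_I`.
-/

lemma finsum_mem_lt_eq_add {M : Type*} [AddCommMonoid M] {f : ℕ → M}
    (hf : (Function.support f).Finite) (k : ℕ) :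
    ∑ᶠ j ∈ {j | k < j}, f j = f (k + 1) + ∑ᶠ j ∈ {j | k + 1 < j}, f j := by
  have hset : {j | k < j} = insert (k + 1) {j | k + 1 < j} := by
    ext x; simp only [Set.mem_ofPred_eq, Set.mem_insert_iff]; omega
  rw [hset, finsum_mem_insert' f (by simp) (hf.inter_of_right _)]

lemma nuI_max_one (f : ℕ → ℕ) (i : ℕ) : nuI f (max i 1) = nuI f i := by
  rw [nuI, nuI, max_eq_left (le_max_right i 1)]

lemma rhoI_max_one (f : ℕ → ℕ) (i : ℕ) : rhoI f (max i 1) = rhoI f i := by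
  funext n
  rw [rhoI, rhoI, max_eq_left (le_max_right i 1)]

lemma rhoI_succ_eq {f : ℕ → ℕ} {I : ℕ} (hI : 1 ≤ I) (h : f I = f (I + 2)) :
    rhoI f (I + 1) = rhoI f I := by
  funext n
  simp only [rhoI, max_eq_left hI, max_eq_left (by omega : 1 ≤ I + 1)]
  split_ifs <;> first | rfl | omega | (obtain rfl : n = I := by omega); exact h

section Maximal

variable {f : ℕ → ℕ} {I : ℕ}

lemma nuI_succ_add_mul (hf : (Function.support f).Finite) (hI : 1 ≤ I) :
    nuI f (I + 1) + I * f I = nuI f I + I * f (I + 2) := by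
  rw [nuI, nuI, max_eq_left hI, max_eq_left (by omega), finsum_mem_lt_eq_add hf (I + 1)]
  ring

lemma apply_add_two_le_of_nuI_le (hf : (Function.support f).Finite) (hI : 1 ≤ I)
    (h : nuI f (I + 1) ≤ nuI f I) : f (I + 2) ≤ f I := by
  have := nuI_succ_add_mul hf hI
  exact Nat.le_of_mul_le_mul_left (by omega) hI

lemma apply_le_apply_add_two_of_nuI_le (hf : (Function.support f).Finite) (hI : 1 ≤ I)
    (h : nuI f I ≤ nuI f (I + 1)) : f I ≤ f (I + 2) := by
  have := nuI_succ_add_mul hf hI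
  exact Nat.le_of_mul_le_mul_left (by omega) hI

variable (hf : IsFreq f) (hI : 1 ≤ I) (hmax : ∀ j, nuI f j ≤ nuI f I)
include hf hI hmax

lemma apply_add_two_le_of_isMax : f (I + 2) ≤ f I :=
  apply_add_two_le_of_nuI_le hf.2 hI (hmax _)

lemma apply_sub_one_le_of_isMax : f (I - 1) ≤ f (I + 1) := by
  obtain rfl | hI' := eq_or_lt_of_le hI
  · simp [hf.1]
  · have h := apply_le_apply_add_two_of_nuI_le hf.2 (I := I - 1) (by omega)
      (by rw [Nat.sub_add_cancel hI]; exact hmax _)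
    rwa [show I - 1 + 2 = I + 1 by omega] at h

lemma isMax_succ_of_apply_eq_zero (h0 : f I = 0) :
    f (I + 2) = 0 ∧ ∀ j, nuI f j ≤ nuI f (I + 1) := by
  have hle := apply_add_two_le_of_isMax hf hI hmax
  have hstep := nuI_succ_add_mul hf.2 hI
  refine ⟨by omega, fun j => ?_⟩
  rw [h0, mul_zero, add_zero] at hstep
  have := hmax j
  omega

lemma apply_succ_pos_of_isMax (hne : nuI f I ≠ 0) (h0 : f I = 0) : 0 < f (I + 1) := by
  refine Nat.pos_of_ne_zero fun h1 => hne ?_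
  have hzero : ∀ k, f (I + k) = 0 ∧ f (I + k + 1) = 0 ∧ ∀ j, nuI f j ≤ nuI f (I + k) := by
    intro k
    induction k with
    | zero => exact ⟨h0, h1, hmax⟩
    | succ k ih =>
      obtain ⟨hk0, hk1, hkmax⟩ := ih
      obtain ⟨hk2, hkmax'⟩ := isMax_succ_of_apply_eq_zero hf (by omega) hkmax hk0
      exact ⟨hk1, hk2, hkmax'⟩
  rw [nuI, max_eq_left hI, h0, h1, finsum_mem_of_eqOn_zero]
  · simp
  · intro j hj
    obtain ⟨k, rfl⟩ := Nat.exists_eq_add_of_le (le_of_lt (Set.mem_ofPred.mp hj))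
    simpa [add_assoc] using (hzero (1 + k)).1

end Maximal

lemma rhoI_sub_one_eq {f : ℕ → ℕ} {I : ℕ} (hI : 1 ≤ I) (h : f (I - 1) = f (I + 1)) :
    rhoI f (I - 1) = rhoI f I := by
  obtain rfl | hI' := eq_or_lt_of_le hI
  · exact (rhoI_max_one f 0).symm
  · have := rhoI_succ_eq (f := f) (I := I - 1) (by omega) (by rwa [show I - 1 + 2 = I + 1 by omega])
    rw [Nat.sub_add_cancel hI] at this
    exact this.symm

theorem stmt18_general (f : ℕ → ℕ) (hf : IsFreq f) (i : ℕ)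
    (hi : MaxIdx f i) :
    (∃ j, RightAdm f j ∧ rhoI f i = rhoI f j) ∧
    (∃ j, LeftAdm f j ∧ rhoI f i = rhoI f j) := by
  obtain ⟨hne, hmax⟩ := hi
  set I := max i 1
  have hI : 1 ≤ I := le_max_right i 1
  rw [← rhoI_max_one f i]
  rw [← nuI_max_one f i] at hne hmax
  have hright := apply_add_two_le_of_isMax hf hI hmax
  have hleft := apply_sub_one_le_of_isMax hf hI hmax
  rcases Nat.eq_zero_or_pos (f I) with h0 | h0
  · have h1 := apply_succ_pos_of_isMax hf hI hmax hne h0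
    have h2 : f (I + 2) = 0 := by omega
    exact ⟨⟨I + 1, ⟨by omega, h1, Or.inr ⟨h0, h2⟩⟩, (rhoI_succ_eq hI (h0.trans h2.symm)).symm⟩,
      ⟨I, ⟨h1, Or.inr ⟨h0, h2⟩⟩, rfl⟩⟩
  rcases Nat.eq_zero_or_pos (f (I + 1)) with h1 | h1
  · refine ⟨⟨I, ⟨hI, h0, Or.inr ⟨by omega, h1⟩⟩, rfl⟩,
      ⟨I - 1, ⟨by rwa [Nat.sub_add_cancel hI], ?_⟩, (rhoI_sub_one_eq hI (by omega)).symm⟩⟩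
    rcases Nat.eq_zero_or_pos (f (I - 1)) with h | h
    · exact Or.inr ⟨h, by rwa [show I - 1 + 2 = I + 1 by omega]⟩
    · exact Or.inl h
  · exact ⟨⟨I, ⟨hI, h0, Or.inl h1⟩, rfl⟩, ⟨I, ⟨h1, Or.inl h0⟩, rfl⟩⟩

/-- if `f` is nonzero and `i` is a maximal index for `f`, then `i`
is equivalent (same annihilation) to some right admissible index and also to
some left admissible index. -/
theorem stmt18 (f : ℕ → ℕ) (hf : IsFreq f) (hne : f ≠ zeroF) (i : ℕ)
    (hi : MaxIdx f i) :
    (∃ j, RightAdm f j ∧ rhoI f i = rhoI f j) ∧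
    (∃ j, LeftAdm f j ∧ rhoI f i = rhoI f j) :=
  stmt18_general f hf i hi
end
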